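/- Let v be a germ of a holomorphic vector field on (ℂ^m, 0) and let Z be the coordinate subspace defined by x₁ = ⋯ = x_r = 0. If for every vector field w that preserves the ideal I_Z (i.e. w(I_Z) ⊆ I_Z) the Lie bracket [v, w] also preserves I_Z, then v itself preserves I_Z. -/

import Mathlib

/-!
A field `v = ∑ vᵢ ∂ᵢ` is a derivation, so it preserves `I_Z = (x₁, …, x_r)` as soon as it maps
each generator `xᵢ` into `I_Z`, i.e. as soon as `vᵢ = v(xᵢ) ∈ I_Z`. The logarithmic field
`xᵢ ∂ᵢ` preserves `I_Z`, so by hypothesis `[v, xᵢ ∂ᵢ](xᵢ) = vᵢ − xᵢ ∂ᵢ vᵢ` lies in `I_Z`,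
and hence so does `vᵢ`.
-/

open MvPolynomial

/-- Action of the vector field with coefficients `v` on a function `f`. -/
noncomputable def act {m : ℕ} (v : Fin m → MvPolynomial (Fin m) ℂ)
    (f : MvPolynomial (Fin m) ℂ) : MvPolynomial (Fin m) ℂ :=
  ∑ i, v i * pderiv i f

theorem Derivation.mem_span_of_forall_mem_span {R A : Type*} [CommSemiring R] [CommRing A]
    [Algebra R A] (D : Derivation R A A) {S : Set A} (hS : ∀ s ∈ S, D s ∈ Ideal.span S)
    {f : A} (hf : f ∈ Ideal.span S) : D f ∈ Ideal.span S := by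
  induction hf using Submodule.span_induction with
  | mem s hs => exact hS s hs
  | zero => simp
  | add a b _ _ ha hb => simpa using add_mem ha hb
  | smul a x hx hDx =>
    rw [smul_eq_mul, D.leibniz, smul_eq_mul, smul_eq_mul]
    exact add_mem (Ideal.mul_mem_left _ a hDx) (Ideal.mul_mem_right _ _ hx)

section act

variable {m : ℕ}

theorem act_eq_derivation (v : Fin m → MvPolynomial (Fin m) ℂ) (f : MvPolynomial (Fin m) ℂ) :
    act v f = (∑ i, v i • pderiv i : Derivation ℂ _ _) f := by
  rw [act, ← Derivation.coeFnAddMonoidHom_apply, map_sum]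
  simp [Derivation.coeFnAddMonoidHom_apply]

theorem act_X (v : Fin m → MvPolynomial (Fin m) ℂ) (i : Fin m) : act v (X i) = v i := by
  simp [act, pderiv_X, Pi.single_apply]

theorem act_single (i : Fin m) (c f : MvPolynomial (Fin m) ℂ) :
    act (Pi.single i c) f = c * pderiv i f := by
  simp [act, Pi.single_apply]

theorem act_single_X_mem {I : Ideal (MvPolynomial (Fin m) ℂ)} {i : Fin m} (hi : X i ∈ I)
    (f : MvPolynomial (Fin m) ℂ) : act (Pi.single i (X i)) f ∈ I := by
  rw [act_single]
  exact I.mul_mem_right _ hi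

theorem bracket_single_X_apply_X (v : Fin m → MvPolynomial (Fin m) ℂ) (i : Fin m) :
    act v (act (Pi.single i (X i)) (X i)) - act (Pi.single i (X i)) (act v (X i)) =
      v i - X i * pderiv i (v i) := by
  rw [act_single, act_single, pderiv_X_self, mul_one, act_X]

end act

theorem stmt_0_general (m r : ℕ) (v : Fin m → MvPolynomial (Fin m) ℂ)
    (I : Ideal (MvPolynomial (Fin m) ℂ))
    (hI : I = Ideal.span ((fun i => (X i : MvPolynomial (Fin m) ℂ)) ''
      {i : Fin m | (i : ℕ) < r}))
    (H : ∀ w : Fin m → MvPolynomial (Fin m) ℂ,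
      (∀ f ∈ I, act w f ∈ I) →
      ∀ f ∈ I, act v (act w f) - act w (act v f) ∈ I) :
    ∀ f ∈ I, act v f ∈ I := by
  have hXI : ∀ i : Fin m, (i : ℕ) < r → X i ∈ I := fun i hi =>
    hI ▸ Ideal.subset_span ⟨i, hi, rfl⟩
  intro f hf
  rw [hI] at hf
  rw [act_eq_derivation]
  refine hI ▸ Derivation.mem_span_of_forall_mem_span _ ?_ hf
  rintro _ ⟨i, hi, rfl⟩
  have hbracket := H _ (fun f _ => act_single_X_mem (hXI i hi) f) (X i) (hXI i hi)
  rw [bracket_single_X_apply_X] at hbracket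
  rw [← hI, ← act_eq_derivation, act_X]
  simpa using add_mem hbracket (I.mul_mem_right (pderiv i (v i)) (hXI i hi))

theorem stmt_0 (m r : ℕ) (hr : r ≤ m) (v : Fin m → MvPolynomial (Fin m) ℂ)
    (I : Ideal (MvPolynomial (Fin m) ℂ))
    (hI : I = Ideal.span ((fun i => (X i : MvPolynomial (Fin m) ℂ)) ''
      {i : Fin m | (i : ℕ) < r}))
    (H : ∀ w : Fin m → MvPolynomial (Fin m) ℂ,
      (∀ f ∈ I, act w f ∈ I) →
      ∀ f ∈ I, act v (act w f) - act w (act v f) ∈ I) :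
    ∀ f ∈ I, act v f ∈ I :=
  stmt_0_general m r v I hI H
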